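/- arXiv:2305.02800 — 6 statements merged into one kernel-verified Lean document; each statement's English description precedes it below -/
import Mathlib

section
/- Let G be a multicolored graph and let C be a cycle in G. Suppose there exist two colors x and y such that every vertex of C carries at least one of x and y in its color set. Then G admits no properly multicolored triangulation. -/
/-- A chord of a cycle (given as a closed walk) in the graph `H`: an edge of `H`
between two vertices of the cycle that are not neighbors on the cycle. -/
def HasChord {V : Type} (H : SimpleGraph V) {v : V} (c : H.Walk v v) : Prop :=
  ∃ u w : V, u ∈ c.support ∧ w ∈ c.support ∧ H.Adj u w ∧ s(u, w) ∉ c.edges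

/-- A graph is triangulated (chordal) if every cycle of length at least four has a chord. -/
def IsChordal {V : Type} (H : SimpleGraph V) : Prop :=
  ∀ ⦃v : V⦄ (c : H.Walk v v), c.IsCycle → 4 ≤ c.length → HasChord H c

/-- A graph is properly multicolored if no edge joins two vertices whose color sets intersect. -/
def ProperlyMulticolored {V C : Type} (H : SimpleGraph V) (col : V → Set C) : Prop :=
  ∀ ⦃u w : V⦄, H.Adj u w → Disjoint (col u) (col w)

/-!
A chord of a cycle cuts off a strictly shorter cycle on a subset of its vertices, so in a chordal
graph every cycle contains three pairwise adjacent vertices. In a properly multicolored graph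
these carry pairwise disjoint color sets, so each of `x` and `y` lies in at most one of them and
the two colors cannot cover all three.
-/

open SimpleGraph Walk

namespace SimpleGraph.Walk

variable {V : Type*} {H : SimpleGraph V}

lemma two_le_length_of_notMem_edges {a b : V} (p : H.Walk a b) (hne : a ≠ b)
    (he : s(a, b) ∉ p.edges) : 2 ≤ p.length := by
  cases p with
  | nil => exact absurd rfl hne
  | cons _ q =>
    cases q with
    | nil => simp at he
    | cons _ _ => simp

/-- The arc of `c` from `u` to `w`, closed up by the chord, is a cycle avoiding the at least
two edges of the other arc. -/
lemma IsCycle.exists_shorter_of_chord_from_start {u w : V} {c : H.Walk u u} (hc : c.IsCycle)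
    (hw : w ∈ c.support) (hadj : H.Adj u w) (hne : s(u, w) ∉ c.edges) :
    ∃ c' : H.Walk w w, c'.IsCycle ∧ c'.length < c.length ∧ c'.support ⊆ c.support := by
  classical
  have hne' : ∀ {a b : V} {p : H.Walk a b}, p.edges ⊆ c.edges → s(w, u) ∉ p.edges := fun hp he =>
    hne (Sym2.eq_swap ▸ hp he)
  have hq : 2 ≤ (c.dropUntil w hw).length :=
    two_le_length_of_notMem_edges _ hadj.ne.symm (hne' (c.edges_dropUntil_subset_edges hw))
  refine ⟨cons hadj.symm (c.takeUntil w hw), ?_, ?_, ?_⟩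
  · exact (cons_isCycle_iff _ _).mpr
      ⟨hc.isPath_takeUntil hw, hne' (c.edges_takeUntil_subset_edges hw)⟩
  · have := congrArg length (c.take_spec hw)
    rw [length_append] at this
    rw [length_cons]
    omega
  · intro a ha
    rw [support_cons, List.mem_cons] at ha
    rcases ha with rfl | ha
    · exact hw
    · exact c.support_takeUntil_subset_support hw ha

lemma IsCycle.exists_shorter_of_chord {v u w : V} {c : H.Walk v v} (hc : c.IsCycle)
    (hu : u ∈ c.support) (hw : w ∈ c.support) (hadj : H.Adj u w) (hne : s(u, w) ∉ c.edges) :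
    ∃ c' : H.Walk w w, c'.IsCycle ∧ c'.length < c.length ∧ c'.support ⊆ c.support := by
  classical
  obtain ⟨c', hc', hlen, hsupp⟩ := (hc.rotate hu).exists_shorter_of_chord_from_start
    ((c.mem_support_rotate_iff u hu).mpr hw) hadj
    (fun he => hne ((c.rotate_edges u hu).perm.subset he))
  refine ⟨c', hc', by simpa using hlen, fun a ha => ?_⟩
  exact (c.mem_support_rotate_iff u hu).mp (hsupp ha)

end SimpleGraph.Walk

lemma IsChordal.exists_triangle_of_isCycle {V : Type} {H : SimpleGraph V} (hH : IsChordal H)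
    {v : V} {c : H.Walk v v} (hc : c.IsCycle) :
    ∃ a ∈ c.support, ∃ b ∈ c.support, ∃ d ∈ c.support, H.Adj a b ∧ H.Adj b d ∧ H.Adj a d := by
  induction hn : c.length using Nat.strong_induction_on generalizing v with
  | _ n ih =>
  rcases hc.three_le_length.eq_or_lt with h3 | h4
  · have hadj (i : ℕ) (hi : i < 3) := c.adj_getVert_succ (i := i) (h3 ▸ hi)
    have hlast : c.getVert 3 = c.getVert 0 := by rw [h3, getVert_length, getVert_zero]
    exact ⟨_, c.getVert_mem_support 0, _, c.getVert_mem_support 1, _, c.getVert_mem_support 2,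
      hadj 0 (by norm_num), hadj 1 (by norm_num), (hlast ▸ hadj 2 (by norm_num)).symm⟩
  · obtain ⟨u, w, hu, hw, hadj, hne⟩ := hH c hc h4
    obtain ⟨c', hc', hlen, hsupp⟩ := hc.exists_shorter_of_chord hu hw hadj hne
    obtain ⟨a, ha, b, hb, d, hd, hab, hbd, had⟩ := ih _ (hn ▸ hlen) hc' rfl
    exact ⟨a, hsupp ha, b, hsupp hb, d, hsupp hd, hab, hbd, had⟩

lemma ProperlyMulticolored.not_two_colors_cover_triangle {V C : Type} {H : SimpleGraph V}
    {col : V → Set C} (hH : ProperlyMulticolored H col) {a b d : V} (hab : H.Adj a b)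
    (hbd : H.Adj b d) (had : H.Adj a d) (x y : C) :
    ¬ ((x ∈ col a ∨ y ∈ col a) ∧ (x ∈ col b ∨ y ∈ col b) ∧ (x ∈ col d ∨ y ∈ col d)) := by
  have := Set.disjoint_left.mp (hH hab)
  have := Set.disjoint_left.mp (hH hbd)
  have := Set.disjoint_left.mp (hH had)
  tauto

/-- if every vertex of a cycle of a multicolored graph `G` carries at least
one of the two colors `x`, `y`, then `G` has no properly multicolored triangulation. -/
theorem no_triangulation_of_two_colored_cycle {V C : Type}
    (G : SimpleGraph V) (col : V → Set C)
    {v : V} (c : G.Walk v v) (hc : c.IsCycle)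
    (x y : C) (hxy : ∀ u ∈ c.support, x ∈ col u ∨ y ∈ col u) :
    ¬ ∃ H : SimpleGraph V, G ≤ H ∧ IsChordal H ∧ ProperlyMulticolored H col := by
  rintro ⟨H, hGH, hchordal, hproper⟩
  obtain ⟨a, ha, b, hb, d, hd, hab, hbd, had⟩ :=
    hchordal.exists_triangle_of_isCycle (hc.mapLe hGH)
  rw [support_mapLe_eq_support] at ha hb hd
  exact hproper.not_two_colors_cover_triangle hab hbd had x y ⟨hxy a ha, hxy b hb, hxy d hd⟩
end

section
/- Let G be a graph, C a cycle in G of length at least three, and v a vertex of C. In every triangulation H of G, either the two neighbors of v on C are adjacent in H, or v is adjacent in H to some vertex of C that is not a neighbor of v on C. -/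
/-!
Delete `v` from the cycle: what remains is a path `p` in `H` between the two neighbours `a`, `b`
of `v`. Induct on the length of `p`. If it is one, `a` and `b` are adjacent. Otherwise `p`
closed up through `v` is a cycle of length at least four in `H`, hence has a chord. A chord at `v`
is the vertex we want; a chord between two vertices of `p` shortcuts `p` to a strictly shorter
walk from `a` to `b` on vertices of `p`, and the induction hypothesis applies to the path it
contains.
-/

open SimpleGraph Walk

namespace SimpleGraph.Walk

variable {V : Type*} {G : SimpleGraph V} {a b : V}

theorem exists_shortcut_of_adj_getVert (p : G.Walk a b) {i j : ℕ} (hij : i + 1 < j)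
    (hj : j ≤ p.length) (h : G.Adj (p.getVert i) (p.getVert j)) :
    ∃ q : G.Walk a b, q.length < p.length ∧ q.support ⊆ p.support := by
  refine ⟨(p.take i).append (cons h (p.drop j)), ?_, ?_⟩
  · simp only [length_append, length_cons, take_length, drop_length]
    omega
  · intro x hx
    rw [mem_support_append_iff, support_cons, List.mem_cons] at hx
    rcases hx with hx | rfl | hx
    · exact (p.isSubwalk_take i).support_subset hx
    · exact p.getVert_mem_support i
    · exact (p.isSubwalk_drop j).support_subset hx

theorem exists_shortcut_of_adj (p : G.Walk a b) {x y : V} (hx : x ∈ p.support)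
    (hy : y ∈ p.support) (hxy : G.Adj x y) (hchord : s(x, y) ∉ p.edges) :
    ∃ q : G.Walk a b, q.length < p.length ∧ q.support ⊆ p.support := by
  obtain ⟨i, rfl, hi⟩ := mem_support_iff_exists_getVert.mp hx
  obtain ⟨j, rfl, hj⟩ := mem_support_iff_exists_getVert.mp hy
  have mem_edges (k : ℕ) (hk : k < p.length) : s(p.getVert k, p.getVert (k + 1)) ∈ p.edges :=
    p.mk_mem_edges_iff_exists.mpr ⟨k, hk, rfl⟩
  rcases lt_or_gt_of_ne (fun hij : i = j => hxy.ne (congrArg p.getVert hij)) with hij | hij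
  · refine p.exists_shortcut_of_adj_getVert (lt_of_le_of_ne hij fun h => ?_) hj hxy
    subst h
    exact hchord (mem_edges i (by omega))
  · refine p.exists_shortcut_of_adj_getVert (lt_of_le_of_ne hij fun h => ?_) hi hxy.symm
    subst h
    exact hchord (Sym2.eq_swap ▸ mem_edges j (by omega))

theorem IsPath.isCycle_cons_concat {p : G.Walk a b} (hp : p.IsPath) {v : V}
    (hv : v ∉ p.support) (hab : a ≠ b) (ha : G.Adj v a) (hb : G.Adj b v) :
    (cons ha (p.concat hb)).IsCycle := by
  refine (cons_isCycle_iff _ _).mpr ⟨hp.concat hv hb, ?_⟩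
  rw [edges_concat, List.concat_eq_append, List.mem_append, List.mem_singleton, Sym2.eq_iff]
  rintro (h | ⟨rfl, -⟩ | ⟨-, rfl⟩)
  · exact hv (p.fst_mem_support_of_mem_edges h)
  · exact hb.ne rfl
  · exact hab rfl

theorem IsPath.notMem_support_dropLast {p : G.Walk a b} (hp : p.IsPath) (hnil : ¬p.Nil) :
    b ∉ p.dropLast.support := by
  have hnodup := hp.support_nodup
  rw [← support_dropLast_concat hnil, ← List.concat_eq_append, List.nodup_concat] at hnodup
  exact hnodup.1

theorem penultimate_tail {p : G.Walk a b} (hp : 2 ≤ p.length) :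
    p.tail.penultimate = p.penultimate := by
  simp only [penultimate, getVert_tail, length_tail]
  congr 1
  omega

end SimpleGraph.Walk

theorem IsChordal.adj_or_exists_adj_of_isPath {V : Type} {H : SimpleGraph V} (hH : IsChordal H)
    {a b v : V} (p : H.Walk a b) (hp : p.IsPath) (hvp : v ∉ p.support) (hab : a ≠ b)
    (ha : H.Adj v a) (hb : H.Adj b v) :
    H.Adj a b ∨ ∃ w ∈ p.support, w ≠ a ∧ w ≠ b ∧ H.Adj v w := by
  classical
  induction hn : p.length using Nat.strong_induction_on generalizing p with
  | _ n ih =>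
  obtain hn1 | hn2 : n = 1 ∨ 2 ≤ n := by
    have : n ≠ 0 := fun h0 => hab (p.eq_of_length_eq_zero (hn.trans h0))
    omega
  · exact .inl (adj_of_length_eq_one (hn.trans hn1))
  set C := cons ha (p.concat hb)
  have chord_from_v : ∀ y ∈ p.support, H.Adj v y → s(v, y) ∉ C.edges →
      ∃ w ∈ p.support, w ≠ a ∧ w ≠ b ∧ H.Adj v w := by
    intro y hy hvy hchord
    refine ⟨y, hy, ?_, ?_, hvy⟩ <;> rintro rfl <;> apply hchord <;> simp [C, edges_concat]
  obtain ⟨x, y, hx, hy, hxy, hchord⟩ :=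
    hH C (hp.isCycle_cons_concat hvp hab ha hb) (by simp [C]; omega)
  have mem_C : ∀ z ∈ C.support, z = v ∨ z ∈ p.support := by
    simp [C, support_concat, or_comm]
  rcases mem_C x hx with rfl | hxp
  · exact .inr (chord_from_v y ((mem_C y hy).resolve_left hxy.ne') hxy hchord)
  rcases mem_C y hy with rfl | hyp
  · exact .inr (chord_from_v x hxp hxy.symm (by rwa [Sym2.eq_swap]))
  obtain ⟨q, hq, hqp⟩ := p.exists_shortcut_of_adj hxp hyp hxy fun h => hchord (by simp [C, h])
  have hbypass : q.bypass.support ⊆ p.support :=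
    fun _ h => hqp (q.support_bypass_subset_support h)
  rcases ih _ ((q.length_bypass_le_length).trans_lt (hn ▸ hq)) q.bypass q.bypass_isPath
      (fun h => hvp (hbypass h)) rfl with h | ⟨w, hw, hwa, hwb, hvw⟩
  · exact .inl h
  · exact .inr ⟨w, hbypass hw, hwa, hwb, hvw⟩

/-- given a cycle `c` of `G` through the vertex `v` (we take the cycle to
start at `v`, so its neighbors on the cycle are `c.getVert 1` and `c.getVert (c.length - 1)`),
in every triangulation `H` of `G` either the two neighbors of `v` on the cycle are adjacent
in `H`, or `v` is adjacent in `H` to a vertex of the cycle that is not one of its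
neighbors on the cycle. -/
theorem neighbors_adjacent_or_chord_from_vertex {V : Type}
    (G H : SimpleGraph V) {v : V} (c : G.Walk v v)
    (hc : c.IsCycle) (hlen : 3 ≤ c.length)
    (hGH : G ≤ H) (hH : IsChordal H) :
    H.Adj (c.getVert 1) (c.getVert (c.length - 1)) ∨
    ∃ w ∈ c.support, w ≠ v ∧ w ≠ c.getVert 1 ∧ w ≠ c.getVert (c.length - 1) ∧ H.Adj v w := by
  have htail : ¬c.tail.Nil := by rw [← length_eq_zero_iff, length_tail]; omega
  have hpenult := penultimate_tail (p := c) (by omega)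
  set p := c.tail.dropLast
  have hsub : p.support ⊆ c.support := ((isSubwalk_rfl c).tail.dropLast).support_subset
  obtain h | ⟨w, hw, hw1, hw2, hvw⟩ := hH.adj_or_exists_adj_of_isPath (p.mapLe hGH)
    (hc.isPath_tail.dropLast.mapLe hGH)
    (by simpa [support_mapLe_eq_support] using hc.isPath_tail.notMem_support_dropLast htail)
    (hpenult ▸ hc.snd_ne_penultimate) (hGH (c.adj_snd hc.not_nil))
    (hGH (c.tail.adj_penultimate htail))
  · rw [hpenult] at h
    exact .inl h
  · rw [support_mapLe_eq_support] at hw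
    rw [hpenult] at hw2
    exact .inr ⟨w, hsub hw, hvw.ne', hw1, hw2, hvw⟩
end

section
/- Let G be a multicolored graph, let x and y be two distinct colors, and let P be a path in G from v to w whose vertices alternate between the colors x and y (consecutive vertices of P carry x and y alternately). Let T be a tree decomposition of G in which, for every color c and every bag B, at most one vertex of B has c in its color set. Let B1 be a bag containing v and B2 a bag containing w. Then every vertex of P is contained in at least one bag on the path from B1 to B2 in T. -/
/-!
A bag contains at most one vertex of `P` of each parity, since such vertices share a colour.
The key fact is that if a bag `t` contains `P a` and `P b`, it contains every `P j` with
`a ≤ j ≤ b`. Otherwise take the first edge `t r` of the tree path from `t` to a bag containing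
`P j`. Deleting it separates `t` from that bag, so both `P[a..j]` and `P[j..b]` meet
`bag t ∩ bag r`, at indices `i₁ < j < i₂` of different parities; by induction on the distance,
`P j ∈ bag r`, and it shares bag `r` and its parity with `P i₁` or `P i₂`. For the theorem,
`P` meets `bag B ∩ bag B'` for every edge `B B'` of the tree path from `B1` to `B2`, and the
stretch of `P` between consecutive such crossings lies in their common bag.
-/

open SimpleGraph

/-- A tree decomposition of a graph `G`. -/
structure IsTreeDecomp {V T : Type} (G : SimpleGraph V) (tree : SimpleGraph T)
    (bag : T → Set V) : Prop where
  isTree : tree.IsTree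
  bag_vertex : ∀ v : V, ∃ t : T, v ∈ bag t
  bag_edge : ∀ ⦃u v : V⦄, G.Adj u v → ∃ t : T, u ∈ bag t ∧ v ∈ bag t
  bag_connected : ∀ v : V, (tree.induce {t : T | v ∈ bag t}).Connected

namespace SimpleGraph

variable {V : Type} {G : SimpleGraph V}

theorem Walk.reachable_deleteEdges_or {u v a b : V} (p : G.Walk a b)
    (hb : (G.deleteEdges {s(u, v)}).Reachable b u ∨ (G.deleteEdges {s(u, v)}).Reachable b v) :
    (G.deleteEdges {s(u, v)}).Reachable a u ∨ (G.deleteEdges {s(u, v)}).Reachable a v := by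
  induction p with
  | nil => exact hb
  | @cons a c b h p ih =>
    by_cases he : s(a, c) = s(u, v)
    · rcases Sym2.eq_iff.mp he with ⟨rfl, -⟩ | ⟨rfl, -⟩
      exacts [Or.inl .rfl, Or.inr .rfl]
    · have hac : (G.deleteEdges {s(u, v)}).Adj a c := deleteEdges_adj.mpr ⟨h, he⟩
      exact (ih hb).imp hac.reachable.trans hac.reachable.trans

theorem Preconnected.reachable_deleteEdges_or (hG : G.Preconnected) (u v a : V) :
    (G.deleteEdges {s(u, v)}).Reachable a u ∨ (G.deleteEdges {s(u, v)}).Reachable a v :=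
  (hG a u).some.reachable_deleteEdges_or (Or.inl .rfl)

theorem Walk.reachable_deleteEdges_of_isPath_cons {u v w : V} {h : G.Adj u v} {p : G.Walk v w}
    (hp : (Walk.cons h p).IsPath) : (G.deleteEdges {s(u, v)}).Reachable v w :=
  reachable_deleteEdges_iff_exists_walk.mpr
    ⟨p, fun he ↦ (cons_isPath_iff h p).mp hp |>.2 (p.fst_mem_support_of_mem_edges he)⟩

def Walk.ParityInjOnBags {T : Type} {u v : V} (P : G.Walk u v) (bag : T → Set V) : Prop :=
  ∀ t i j, i ≤ P.length → j ≤ P.length → P.getVert i ∈ bag t → P.getVert j ∈ bag t →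
    i % 2 = j % 2 → i = j

end SimpleGraph

namespace IsTreeDecomp

variable {V T : Type} {G : SimpleGraph V} {tree : SimpleGraph T} {bag : T → Set V}

theorem mem_bag_of_reachable_deleteEdges (htd : IsTreeDecomp G tree bag) {t r s s' : T}
    (hadj : tree.Adj t r) {u : V} (hs : u ∈ bag s) (hs' : u ∈ bag s')
    (hst : (tree.deleteEdges {s(t, r)}).Reachable s t)
    (hs'r : (tree.deleteEdges {s(t, r)}).Reachable s' r) : u ∈ bag t ∧ u ∈ bag r := by
  obtain ⟨W⟩ := (htd.bag_connected u).preconnected ⟨s, hs⟩ ⟨s', hs'⟩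
  have hbridge : tree.IsBridge s(t, r) :=
    isAcyclic_iff_forall_isBridge.mp htd.isTree.isAcyclic hadj
  have hedge : s(t, r) ∈ (W.map (Embedding.induce _).toHom).edges :=
    Walk.mem_edges_of_not_reachable_deleteEdges _ fun h ↦ hbridge (hst.symm.trans (h.trans hs'r))
  have hmem : ∀ z ∈ (W.map (Embedding.induce _).toHom).support, u ∈ bag z := by
    simp only [Walk.support_map, List.mem_map]
    rintro _ ⟨z, -, rfl⟩
    exact z.2
  exact ⟨hmem _ (Walk.fst_mem_support_of_mem_edges _ hedge),
    hmem _ (Walk.snd_mem_support_of_mem_edges _ hedge)⟩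

theorem exists_getVert_mem_bag_of_reachable_deleteEdges (htd : IsTreeDecomp G tree bag)
    {t r s s' : T} (hadj : tree.Adj t r) {v w : V} (P : G.Walk v w) {a b : ℕ} (hab : a ≤ b)
    (hb : b ≤ P.length) (hs : P.getVert a ∈ bag s) (hs' : P.getVert b ∈ bag s')
    (hst : (tree.deleteEdges {s(t, r)}).Reachable s t)
    (hs'r : (tree.deleteEdges {s(t, r)}).Reachable s' r) :
    ∃ i, a ≤ i ∧ i ≤ b ∧ P.getVert i ∈ bag t ∧ P.getVert i ∈ bag r := by
  induction b, hab using Nat.le_induction generalizing s' with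
  | base => exact ⟨a, le_rfl, le_rfl, htd.mem_bag_of_reachable_deleteEdges hadj hs hs' hst hs'r⟩
  | succ b hab ih =>
    obtain ⟨t', hbt', hbt''⟩ := htd.bag_edge (P.adj_getVert_succ (by omega : b < P.length))
    rcases htd.isTree.connected.preconnected.reachable_deleteEdges_or t r t' with ht't | ht'r
    · exact ⟨b + 1, by omega, le_rfl,
        htd.mem_bag_of_reachable_deleteEdges hadj hbt'' hs' ht't hs'r⟩
    · obtain ⟨i, hai, hib, hit, hir⟩ := ih (by omega) hbt' ht'r
      exact ⟨i, hai, by omega, hit, hir⟩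

theorem getVert_mem_bag_of_isPath (htd : IsTreeDecomp G tree bag) {v w : V} {P : G.Walk v w}
    (hpar : P.ParityInjOnBags bag) {t s : T} (ρ : tree.Walk t s) (hρ : ρ.IsPath) :
    ∀ {a j b : ℕ}, a ≤ j → j ≤ b → b ≤ P.length → P.getVert a ∈ bag t →
      P.getVert b ∈ bag t → P.getVert j ∈ bag s → P.getVert j ∈ bag t := by
  induction ρ with
  | nil => exact fun _ _ _ _ _ hj ↦ hj
  | @cons t r s hadj ρ ih =>
    intro a j b haj hjb hb hat hbt hjs
    by_contra hjt
    have hsr := (Walk.reachable_deleteEdges_of_isPath_cons hρ).symm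
    obtain ⟨i₁, hai₁, hi₁j, hi₁t, hi₁r⟩ :=
      htd.exists_getVert_mem_bag_of_reachable_deleteEdges hadj P haj (by omega) hat hjs .rfl hsr
    obtain ⟨i₂, hji₂, hi₂b, hi₂r, hi₂t⟩ :=
      htd.exists_getVert_mem_bag_of_reachable_deleteEdges hadj.symm P hjb hb hjs hbt
        (by rwa [Sym2.eq_swap]) (by rw [Sym2.eq_swap])
    have hi₁j : i₁ < j := lt_of_le_of_ne hi₁j (by rintro rfl; exact hjt hi₁t)
    have hji₂ : j < i₂ := lt_of_le_of_ne hji₂ (by rintro rfl; exact hjt hi₂t)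
    have hi₁i₂ : i₁ % 2 ≠ i₂ % 2 := fun h ↦ by
      have := hpar t i₁ i₂ (by omega) (by omega) hi₁t hi₂t h
      omega
    have hjr :=
      ih (Walk.cons_isPath_iff hadj ρ |>.mp hρ).1 hi₁j.le hji₂.le (by omega) hi₁r hi₂r hjs
    rcases (by omega : j % 2 = i₁ % 2 ∨ j % 2 = i₂ % 2) with h | h
    · have := hpar r j i₁ (by omega) (by omega) hjr hi₁r h
      omega
    · have := hpar r j i₂ (by omega) (by omega) hjr hi₂r h
      omega

theorem getVert_mem_bag_of_le_of_le (htd : IsTreeDecomp G tree bag) {v w : V} {P : G.Walk v w}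
    (hpar : P.ParityInjOnBags bag) {t : T} {a j b : ℕ} (haj : a ≤ j) (hjb : j ≤ b)
    (hb : b ≤ P.length) (hat : P.getVert a ∈ bag t) (hbt : P.getVert b ∈ bag t) :
    P.getVert j ∈ bag t := by
  obtain ⟨s, hjs⟩ := htd.bag_vertex (P.getVert j)
  obtain ⟨ρ, hρ⟩ := htd.isTree.connected.exists_isPath t s
  exact htd.getVert_mem_bag_of_isPath hpar ρ hρ haj hjb hb hat hbt hjs

theorem exists_mem_support_getVert_mem_bag (htd : IsTreeDecomp G tree bag) {v w : V}
    {P : G.Walk v w} (hpar : P.ParityInjOnBags bag) {B₁ B₂ : T} (q : tree.Walk B₁ B₂)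
    (hq : q.IsPath) : ∀ {a j b : ℕ}, a ≤ j → j ≤ b → b ≤ P.length → P.getVert a ∈ bag B₁ →
      P.getVert b ∈ bag B₂ → ∃ t ∈ q.support, P.getVert j ∈ bag t := by
  induction q with
  | nil => exact fun haj hjb hb ha hb' ↦
      ⟨_, List.mem_singleton_self _, htd.getVert_mem_bag_of_le_of_le hpar haj hjb hb ha hb'⟩
  | @cons B₁ c B₂ hadj q ih =>
    intro a j b haj hjb hb ha hb'
    obtain ⟨i, hai, hib, hiB₁, hic⟩ :=
      htd.exists_getVert_mem_bag_of_reachable_deleteEdges hadj P (haj.trans hjb) hb ha hb' .rfl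
        (Walk.reachable_deleteEdges_of_isPath_cons hq).symm
    by_cases hji : j ≤ i
    · exact ⟨B₁, List.mem_cons_self,
        htd.getVert_mem_bag_of_le_of_le hpar haj hji (by omega) ha hiB₁⟩
    · obtain ⟨t, ht, hjt⟩ :=
        ih (Walk.cons_isPath_iff hadj q |>.mp hq).1 (by omega) hjb hb hic hb'
      exact ⟨t, List.mem_cons_of_mem _ ht, hjt⟩

end IsTreeDecomp

theorem path_vertices_in_bags_on_tree_path_general {V C T : Type}
    (G : SimpleGraph V) (col : V → Set C)
    (x y : C)
    {v w : V} (P : G.Walk v w) (hP : P.IsPath)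
    (halt : ∀ i ≤ P.length,
      (i % 2 = 0 → x ∈ col (P.getVert i)) ∧ (i % 2 = 1 → y ∈ col (P.getVert i)))
    (tree : SimpleGraph T) (bag : T → Set V)
    (htd : IsTreeDecomp G tree bag)
    (hcol : ∀ (t : T) (c : C), ∀ u₁ ∈ bag t, ∀ u₂ ∈ bag t,
      c ∈ col u₁ → c ∈ col u₂ → u₁ = u₂)
    {B1 B2 : T} (hB1 : v ∈ bag B1) (hB2 : w ∈ bag B2)
    (q : tree.Walk B1 B2) (hq : q.IsPath) :
    ∀ u ∈ P.support, ∃ t ∈ q.support, u ∈ bag t := by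
  have hcolor : ∀ i ≤ P.length, (if i % 2 = 0 then x else y) ∈ col (P.getVert i) := by
    intro i hi
    split_ifs with h
    exacts [(halt i hi).1 h, (halt i hi).2 (by omega)]
  have hpar : P.ParityInjOnBags bag := by
    intro t i j hi hj hit hjt hij
    refine hP.getVert_injOn hi hj (hcol t _ _ hit _ hjt (hcolor i hi) ?_)
    rw [hij]
    exact hcolor j hj
  intro u hu
  obtain ⟨j, rfl, hj⟩ := Walk.mem_support_iff_exists_getVert.mp hu
  exact htd.exists_mem_support_getVert_mem_bag hpar q hq (Nat.zero_le j) hj le_rfl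
    (by rwa [Walk.getVert_zero]) (by rwa [Walk.getVert_length])

/-- let `P` be a path in the multicolored graph `G` from `v` to `w` whose
vertices alternately carry the two distinct colors `x` and `y`, and let `T` be a tree
decomposition in which every bag contains, for each color, at most one vertex carrying
that color.  If `B1` is a bag containing `v` and `B2` a bag containing `w`, then every
vertex of `P` lies in some bag on the (unique) path from `B1` to `B2` in the tree. -/
theorem path_vertices_in_bags_on_tree_path {V C T : Type}
    (G : SimpleGraph V) (col : V → Set C)
    (x y : C) (hxy : x ≠ y)
    {v w : V} (P : G.Walk v w) (hP : P.IsPath)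
    (halt : ∀ i ≤ P.length,
      (i % 2 = 0 → x ∈ col (P.getVert i)) ∧ (i % 2 = 1 → y ∈ col (P.getVert i)))
    (tree : SimpleGraph T) (bag : T → Set V)
    (htd : IsTreeDecomp G tree bag)
    (hcol : ∀ (t : T) (c : C), ∀ u₁ ∈ bag t, ∀ u₂ ∈ bag t,
      c ∈ col u₁ → c ∈ col u₂ → u₁ = u₂)
    {B1 B2 : T} (hB1 : v ∈ bag B1) (hB2 : w ∈ bag B2)
    (q : tree.Walk B1 B2) (hq : q.IsPath) :
    ∀ u ∈ P.support, ∃ t ∈ q.support, u ∈ bag t :=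
  path_vertices_in_bags_on_tree_path_general G col x y P hP halt tree bag htd hcol hB1 hB2 q hq
end

section
/- Let G be a multicolored graph containing a zipper chain (P,Q) such that some cycle of G fully contains both P and Q. Then in any properly multicolored triangulation of G there is no edge between two non-adjacent vertices of P (and, symmetrically, none between two non-adjacent vertices of Q). -/
/-- A zipper chain in the multicolored graph `G` with coloring `col`: two vertex-disjoint
induced paths `p 1, …, p plen` and `q 1, …, q qlen` (1-based indexing), multicolored with
7 distinct colors `a`, `bP`, `bQ` and `c 1, c 2, c 3, c 0` (where `c r` for `r : ZMod 4`
stands for the paper's `c_j` with `j ≡ r (mod 4)`): the vertex `p i` carries `a` if `i` is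
odd and `bP` if `i` is even, together with `c i`; the vertex `q i` carries `a` if `i` is
even and `bQ` if `i` is odd, together with `c (i+2)`. -/
structure ZipperChain {V C : Type} (G : SimpleGraph V) (col : V → Set C) where
  a : C
  bP : C
  bQ : C
  c : ZMod 4 → C
  distinct : ([a, bP, bQ, c 0, c 1, c 2, c 3] : List C).Nodup
  plen : ℕ
  qlen : ℕ
  plen_pos : 1 ≤ plen
  qlen_pos : 1 ≤ qlen
  p : ℕ → V
  q : ℕ → V
  p_inj : ∀ i j, 1 ≤ i → i ≤ plen → 1 ≤ j → j ≤ plen → p i = p j → i = j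
  q_inj : ∀ i j, 1 ≤ i → i ≤ qlen → 1 ≤ j → j ≤ qlen → q i = q j → i = j
  pq_disjoint : ∀ i j, 1 ≤ i → i ≤ plen → 1 ≤ j → j ≤ qlen → p i ≠ q j
  p_adj : ∀ i, 1 ≤ i → i + 1 ≤ plen → G.Adj (p i) (p (i + 1))
  q_adj : ∀ i, 1 ≤ i → i + 1 ≤ qlen → G.Adj (q i) (q (i + 1))
  p_induced : ∀ i j, 1 ≤ i → i ≤ plen → 1 ≤ j → j ≤ plen →
    G.Adj (p i) (p j) → i = j + 1 ∨ j = i + 1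
  q_induced : ∀ i j, 1 ≤ i → i ≤ qlen → 1 ≤ j → j ≤ qlen →
    G.Adj (q i) (q j) → i = j + 1 ∨ j = i + 1
  col_p : ∀ i, 1 ≤ i → i ≤ plen →
    col (p i) = {(if i % 2 = 1 then a else bP), c (i : ZMod 4)}
  col_q : ∀ i, 1 ≤ i → i ≤ qlen →
    col (q i) = {(if i % 2 = 0 then a else bQ), c ((i : ZMod 4) + 2)}

/-- Some cycle of `G` fully contains both paths of the zipper chain. -/
def ZipperChain.InCycle {V C : Type} {G : SimpleGraph V} {col : V → Set C}
    (zc : ZipperChain G col) : Prop :=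
  ∃ (v : V) (w : G.Walk v v), w.IsCycle ∧
    (∀ i, 1 ≤ i → i ≤ zc.plen → zc.p i ∈ w.support) ∧
    (∀ j, 1 ≤ j → j ≤ zc.qlen → zc.q j ∈ w.support)

/-- The `ℓ`-th tooth of `P` and the `m`-th tooth of `Q` (1-based; the `ℓ`-th tooth of `P`
consists of the vertices `p i` with `4ℓ-3 ≤ i ≤ 4ℓ`) are locked together in `H`: `H` has
an edge between a vertex of the first tooth and a vertex of the second tooth such that at
least one endpoint carries the color `a`. -/
def ZipperChain.Locked {V C : Type} {G : SimpleGraph V} {col : V → Set C}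
    (zc : ZipperChain G col) (H : SimpleGraph V) (ℓ m : ℕ) : Prop :=
  ∃ i j : ℕ, 1 ≤ i ∧ 4 * ℓ - 3 ≤ i ∧ i ≤ 4 * ℓ ∧ i ≤ zc.plen ∧
    1 ≤ j ∧ 4 * m - 3 ≤ j ∧ j ≤ 4 * m ∧ j ≤ zc.qlen ∧
    H.Adj (zc.p i) (zc.q j) ∧ (zc.a ∈ col (zc.p i) ∨ zc.a ∈ col (zc.q j))

/-!
In a properly multicolored `H`, two vertices of `P` of the same parity share the color `a`
or `bP`, so every edge of `H` inside `P` spans an odd gap. An edge `p i p j` with odd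
`j - i ≥ 3` closes, together with `p i, …, p j`, a cycle of length at least four; its chord
in the chordal graph `H` is again an edge inside `P`, spanning a strictly smaller gap.
By induction on the gap, no such edge exists. The same holds for `Q`.
-/

open SimpleGraph

theorem IsChordal.exists_chord_of_isPath {V : Type} {H : SimpleGraph V} (hH : IsChordal H)
    {u v : V} {W : H.Walk u v} (hW : W.IsPath) (hlen : 3 ≤ W.length) (hvu : H.Adj v u) :
    ∃ x ∈ W.support, ∃ y ∈ W.support,
      H.Adj x y ∧ s(x, y) ∉ W.edges ∧ s(x, y) ≠ s(v, u) := by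
  have hcyc : (Walk.cons hvu W).IsCycle := by
    refine (Walk.cons_isCycle_iff W hvu).2 ⟨hW, fun hmem => ?_⟩
    have := hW.length_eq_one_of_mem_edges (Sym2.eq_swap ▸ hmem)
    omega
  obtain ⟨x, y, hx, hy, hxy, hnot⟩ := hH _ hcyc (by simp only [Walk.length_cons]; omega)
  have hsupp : ∀ z ∈ (Walk.cons hvu W).support, z ∈ W.support := by
    simp only [Walk.support_cons, List.mem_cons, forall_eq_or_imp]
    exact ⟨W.end_mem_support, fun _ => id⟩
  simp only [Walk.edges_cons, List.mem_cons, not_or] at hnot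
  exact ⟨x, hsupp x hx, y, hsupp y hy, hxy, hnot.2, hnot.1⟩

namespace SimpleGraph

variable {V : Type} {H : SimpleGraph V}

def seqWalk (p : ℕ → V) (i : ℕ) :
    (n : ℕ) → (∀ k < n, H.Adj (p (i + k)) (p (i + k + 1))) → H.Walk (p i) (p (i + n))
  | 0, _ => Walk.nil
  | n + 1, h => (seqWalk p i n fun k hk => h k (by omega)).concat (h n (by omega))

variable (p : ℕ → V) (i : ℕ)

theorem support_seqWalk (n : ℕ) (h : ∀ k < n, H.Adj (p (i + k)) (p (i + k + 1))) :
    (seqWalk p i n h).support = (List.range (n + 1)).map fun k => p (i + k) := by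
  induction n with
  | zero => rfl
  | succ n ih => simp [seqWalk, Walk.support_concat, ih, List.range_succ (n := n + 1)]

theorem mem_support_seqWalk {n : ℕ} {h : ∀ k < n, H.Adj (p (i + k)) (p (i + k + 1))} {x : V} :
    x ∈ (seqWalk p i n h).support ↔ ∃ k ≤ n, p (i + k) = x := by
  simp [support_seqWalk]

theorem length_seqWalk (n : ℕ) (h : ∀ k < n, H.Adj (p (i + k)) (p (i + k + 1))) :
    (seqWalk p i n h).length = n := by
  simpa [support_seqWalk] using (seqWalk p i n h).length_support.symm

theorem mem_edges_seqWalk {n : ℕ} (h : ∀ k < n, H.Adj (p (i + k)) (p (i + k + 1)))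
    {k : ℕ} (hk : k < n) : s(p (i + k), p (i + k + 1)) ∈ (seqWalk p i n h).edges := by
  induction n with
  | zero => omega
  | succ n ih =>
    rw [seqWalk, Walk.edges_concat, List.concat_eq_append, List.mem_append]
    rcases Nat.lt_succ_iff_lt_or_eq.mp hk with hk | rfl
    · exact Or.inl (ih _ hk)
    · exact Or.inr (List.mem_singleton_self _)

theorem isPath_seqWalk {n : ℕ} (h : ∀ k < n, H.Adj (p (i + k)) (p (i + k + 1)))
    (hinj : Set.InjOn p (Set.Icc i (i + n))) : (seqWalk p i n h).IsPath := by
  refine Walk.IsPath.mk' ?_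
  rw [support_seqWalk]
  refine List.Nodup.map_on (fun k hk l hl hkl => ?_) List.nodup_range
  rw [List.mem_range] at hk hl
  have := hinj ⟨le_add_right le_rfl, by omega⟩ ⟨le_add_right le_rfl, by omega⟩ hkl
  omega

end SimpleGraph

namespace IsChordal

variable {V : Type} {H : SimpleGraph V}

theorem exists_shorter_chord_seq (hH : IsChordal H) {p : ℕ → V} {i n : ℕ}
    (hadj : ∀ k < n, H.Adj (p (i + k)) (p (i + k + 1)))
    (hinj : Set.InjOn p (Set.Icc i (i + n))) (hn : 3 ≤ n) (hchord : H.Adj (p i) (p (i + n))) :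
    ∃ k l, k + 2 ≤ l ∧ l ≤ n ∧ l - k < n ∧ H.Adj (p (i + k)) (p (i + l)) := by
  set W := seqWalk p i n hadj
  have hshort : ∀ k l, k < l → l ≤ n → H.Adj (p (i + k)) (p (i + l)) →
      s(p (i + k), p (i + l)) ∉ W.edges → s(p (i + k), p (i + l)) ≠ s(p (i + n), p i) →
      ∃ k l, k + 2 ≤ l ∧ l ≤ n ∧ l - k < n ∧ H.Adj (p (i + k)) (p (i + l)) := by
    intro k l hkl hln hadjkl hnotW hne
    have hnext : l ≠ k + 1 := by
      rintro rfl
      exact hnotW (mem_edges_seqWalk p i hadj (by omega))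
    have hfull : ¬(k = 0 ∧ l = n) := by
      rintro ⟨rfl, rfl⟩
      exact hne Sym2.eq_swap
    exact ⟨k, l, by omega, hln, by omega, hadjkl⟩
  obtain ⟨x, hx, y, hy, hxy, hnotW, hne⟩ := hH.exists_chord_of_isPath
    (isPath_seqWalk p i hadj hinj) (by rwa [length_seqWalk]) hchord.symm
  obtain ⟨k, hk, rfl⟩ := (mem_support_seqWalk p i).1 hx
  obtain ⟨l, hl, rfl⟩ := (mem_support_seqWalk p i).1 hy
  rcases lt_trichotomy k l with hkl | rfl | hlk
  · exact hshort k l hkl hl hxy hnotW hne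
  · exact absurd rfl hxy.ne
  · rw [Sym2.eq_swap] at hnotW hne
    exact hshort l k hlk hk hxy.symm hnotW hne

theorem adj_seq_consecutive (hH : IsChordal H) {p : ℕ → V} {len : ℕ}
    (hadj : ∀ i, 1 ≤ i → i + 1 ≤ len → H.Adj (p i) (p (i + 1)))
    (hinj : Set.InjOn p (Set.Icc 1 len))
    (hpar : ∀ i j, 1 ≤ i → i ≤ len → 1 ≤ j → j ≤ len → i % 2 = j % 2 →
      ¬H.Adj (p i) (p j))
    {i j : ℕ} (hi : 1 ≤ i) (hj : j ≤ len) (hij : i < j) (hchord : H.Adj (p i) (p j)) :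
    j = i + 1 := by
  induction hd : j - i using Nat.strong_induction_on generalizing i j with
  | _ d ih =>
    obtain ⟨n, rfl⟩ := Nat.exists_eq_add_of_lt hij
    by_cases hn : n = 0
    · omega
    have hodd : n % 2 = 0 := by
      by_contra hodd
      exact hpar _ _ hi (by omega) (by omega) hj (by omega) hchord
    obtain ⟨k, l, hkl, hln, hlt, hadjkl⟩ := hH.exists_shorter_chord_seq (i := i) (n := n + 1)
      (fun k hk => hadj _ (by omega) (by omega))
      (hinj.mono (Set.Icc_subset_Icc hi (by omega))) (by omega)
      (by simpa only [add_assoc] using hchord)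
    have := ih (l - k) (by omega) (by omega) (by omega) (by omega) hadjkl (by omega)
    omega

theorem eq_add_one_or_eq_add_one_of_adj_seq (hH : IsChordal H) {p : ℕ → V} {len : ℕ}
    (hadj : ∀ i, 1 ≤ i → i + 1 ≤ len → H.Adj (p i) (p (i + 1)))
    (hinj : Set.InjOn p (Set.Icc 1 len))
    (hpar : ∀ i j, 1 ≤ i → i ≤ len → 1 ≤ j → j ≤ len → i % 2 = j % 2 →
      ¬H.Adj (p i) (p j)) :
    ∀ i j, 1 ≤ i → i ≤ len → 1 ≤ j → j ≤ len → H.Adj (p i) (p j) →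
      i = j + 1 ∨ j = i + 1 := by
  intro i j hi hi' hj hj' hchord
  rcases lt_trichotomy i j with hij | rfl | hji
  · exact Or.inr (hH.adj_seq_consecutive hadj hinj hpar hi hj' hij hchord)
  · exact absurd rfl hchord.ne
  · exact Or.inl (hH.adj_seq_consecutive hadj hinj hpar hj hi' hji hchord.symm)

end IsChordal

theorem ProperlyMulticolored.not_adj_of_mem {V C : Type} {H : SimpleGraph V} {col : V → Set C}
    (h : ProperlyMulticolored H col) {u w : V} {c : C} (hu : c ∈ col u) (hw : c ∈ col w) :
    ¬H.Adj u w :=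
  fun huw => Set.disjoint_left.1 (h huw) hu hw

namespace ZipperChain

variable {V C : Type} {G : SimpleGraph V} {col : V → Set C} (zc : ZipperChain G col)

theorem parity_color_mem_col_p {i : ℕ} (hi : 1 ≤ i) (hi' : i ≤ zc.plen) :
    (if i % 2 = 1 then zc.a else zc.bP) ∈ col (zc.p i) := by
  rw [zc.col_p i hi hi']
  exact Set.mem_insert _ _

theorem parity_color_mem_col_q {i : ℕ} (hi : 1 ≤ i) (hi' : i ≤ zc.qlen) :
    (if i % 2 = 0 then zc.a else zc.bQ) ∈ col (zc.q i) := by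
  rw [zc.col_q i hi hi']
  exact Set.mem_insert _ _

theorem not_adj_p_of_mod_two_eq {H : SimpleGraph V} (hproper : ProperlyMulticolored H col) :
    ∀ i j, 1 ≤ i → i ≤ zc.plen → 1 ≤ j → j ≤ zc.plen → i % 2 = j % 2 →
      ¬H.Adj (zc.p i) (zc.p j) :=
  fun _ _ hi hi' hj hj' hpar =>
    hproper.not_adj_of_mem (zc.parity_color_mem_col_p hi hi')
      (hpar ▸ zc.parity_color_mem_col_p hj hj')

theorem not_adj_q_of_mod_two_eq {H : SimpleGraph V} (hproper : ProperlyMulticolored H col) :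
    ∀ i j, 1 ≤ i → i ≤ zc.qlen → 1 ≤ j → j ≤ zc.qlen → i % 2 = j % 2 →
      ¬H.Adj (zc.q i) (zc.q j) :=
  fun _ _ hi hi' hj hj' hpar =>
    hproper.not_adj_of_mem (zc.parity_color_mem_col_q hi hi')
      (hpar ▸ zc.parity_color_mem_col_q hj hj')

end ZipperChain

theorem zipper_no_internal_chord_general {V C : Type} (G : SimpleGraph V) (col : V → Set C)
    (zc : ZipperChain G col)
    (H : SimpleGraph V) (hGH : G ≤ H) (hchord : IsChordal H)
    (hproper : ProperlyMulticolored H col) :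
    (∀ i j, 1 ≤ i → i ≤ zc.plen → 1 ≤ j → j ≤ zc.plen →
      H.Adj (zc.p i) (zc.p j) → i = j + 1 ∨ j = i + 1) ∧
    (∀ i j, 1 ≤ i → i ≤ zc.qlen → 1 ≤ j → j ≤ zc.qlen →
      H.Adj (zc.q i) (zc.q j) → i = j + 1 ∨ j = i + 1) :=
  ⟨hchord.eq_add_one_or_eq_add_one_of_adj_seq (fun i hi hi' => hGH (zc.p_adj i hi hi'))
      (fun i hi j hj => zc.p_inj i j hi.1 hi.2 hj.1 hj.2) (zc.not_adj_p_of_mod_two_eq hproper),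
    hchord.eq_add_one_or_eq_add_one_of_adj_seq (fun i hi hi' => hGH (zc.q_adj i hi hi'))
      (fun i hi j hj => zc.q_inj i j hi.1 hi.2 hj.1 hj.2) (zc.not_adj_q_of_mod_two_eq hproper)⟩

/-- if a zipper chain `(P,Q)` of `G` is fully contained in a cycle of `G`,
then no properly multicolored triangulation `H` of `G` has an edge between two
non-adjacent vertices of `P`, nor between two non-adjacent vertices of `Q`. -/
theorem zipper_no_internal_chord {V C : Type} (G : SimpleGraph V) (col : V → Set C)
    (zc : ZipperChain G col) (hcyc : zc.InCycle)
    (H : SimpleGraph V) (hGH : G ≤ H) (hchord : IsChordal H)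
    (hproper : ProperlyMulticolored H col) :
    (∀ i j, 1 ≤ i → i ≤ zc.plen → 1 ≤ j → j ≤ zc.plen →
      H.Adj (zc.p i) (zc.p j) → i = j + 1 ∨ j = i + 1) ∧
    (∀ i j, 1 ≤ i → i ≤ zc.qlen → 1 ≤ j → j ≤ zc.qlen →
      H.Adj (zc.q i) (zc.q j) → i = j + 1 ∨ j = i + 1) :=
  zipper_no_internal_chord_general G col zc H hGH hchord hproper
end

section
/- Let G be a multicolored graph containing a zipper chain (P,Q) such that some cycle of G fully contains both P and Q, and consider any properly multicolored triangulation of G. If the triangulation contains two edges between P and Q that share a common endpoint p in P, then p is adjacent in the triangulation to every vertex of Q lying between the other two endpoints on Q. -/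
/-!
Vertices of `Q` whose indices differ by two share the colour `a` or `bQ`, so a properly
multicoloured `H` has no edge `q k, q (k + 2)`. In a chordal graph a path without such short
chords is induced: a chord spanning at least three edges closes a cycle of length at least
four, whose own chord is a shorter chord of the path. If `p i` is adjacent to both ends of an induced path avoiding it, the
cycle through `p i` and the path has length at least four, and its only possible chords join
`p i` to inner vertices of the path; splitting the path at such a vertex and inducting on
the length gives adjacency to all of it.
-/

open SimpleGraph

variable {V : Type} {H : SimpleGraph V} {g : ℕ → V} {n : ℕ}

structure IsPathSeq (H : SimpleGraph V) (g : ℕ → V) (n : ℕ) : Prop where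
  injOn : Set.InjOn g (Set.Iic n)
  adj : ∀ k < n, H.Adj (g k) (g (k + 1))

namespace IsPathSeq

theorem mono (hg : IsPathSeq H g n) {m : ℕ} (hm : m ≤ n) : IsPathSeq H g m where
  injOn := hg.injOn.mono (Set.Iic_subset_Iic.2 hm)
  adj k hk := hg.adj k (by omega)

theorem shift (hg : IsPathSeq H g n) {m : ℕ} (hm : m ≤ n) :
    IsPathSeq H (fun k => g (m + k)) (n - m) where
  injOn a ha b hb hab := by
    simp only [Set.mem_Iic] at ha hb
    have := hg.injOn (show m + a ≤ n by omega) (show m + b ≤ n by omega) hab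
    omega
  adj k hk := hg.adj (m + k) (by omega)

theorem cons (hg : IsPathSeq H g n) {x : V} (hx : ∀ k ≤ n, g k ≠ x) (h : H.Adj x (g 0)) :
    IsPathSeq H (fun | 0 => x | k + 1 => g k) (n + 1) where
  injOn a ha b hb hab := by
    simp only [Set.mem_Iic] at ha hb
    match a, b, hab with
    | 0, 0, _ => rfl
    | 0, b + 1, hab => exact absurd hab.symm (hx b (by omega))
    | a + 1, 0, hab => exact absurd hab (hx a (by omega))
    | a + 1, b + 1, hab => rw [hg.injOn (show a ≤ n by omega) (show b ≤ n by omega) hab]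
  adj
    | 0, _ => h
    | k + 1, hk => hg.adj k (by omega)

def walk : ∀ {n : ℕ}, IsPathSeq H g n → H.Walk (g 0) (g n)
  | 0, _ => .nil
  | n + 1, hg => (hg.mono n.le_succ).walk.concat (hg.adj n n.lt_succ_self)

theorem length_walk : ∀ {n : ℕ} (hg : IsPathSeq H g n), hg.walk.length = n
  | 0, _ => rfl
  | n + 1, hg => by rw [walk, Walk.length_concat, length_walk]

theorem support_walk : ∀ {n : ℕ} (hg : IsPathSeq H g n),
    hg.walk.support = (List.range (n + 1)).map g
  | 0, _ => rfl
  | n + 1, hg => by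
    rw [walk, Walk.support_concat, support_walk, List.range_succ (n := n + 1), List.map_append,
      List.map_singleton]

theorem edges_walk : ∀ {n : ℕ} (hg : IsPathSeq H g n),
    hg.walk.edges = (List.range n).map fun k => s(g k, g (k + 1))
  | 0, _ => rfl
  | n + 1, hg => by
    rw [walk, Walk.edges_concat, edges_walk, List.concat_eq_append,
      List.range_succ (n := n), List.map_append, List.map_singleton]

theorem isPath_walk (hg : IsPathSeq H g n) : hg.walk.IsPath := by
  rw [Walk.isPath_def, support_walk]
  exact List.nodup_range.map_on fun a ha b hb hab =>
    hg.injOn (Nat.lt_succ_iff.1 (List.mem_range.1 ha)) (Nat.lt_succ_iff.1 (List.mem_range.1 hb)) hab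

theorem isCycle_cons_walk (hg : IsPathSeq H g n) (hn : 2 ≤ n) (hclose : H.Adj (g n) (g 0)) :
    (Walk.cons hclose hg.walk).IsCycle := by
  refine (Walk.cons_isCycle_iff _ hclose).2 ⟨hg.isPath_walk, ?_⟩
  rw [edges_walk, List.mem_map]
  rintro ⟨k, hk, he⟩
  rw [List.mem_range] at hk
  have mem : ∀ {i}, i ≤ n → i ∈ Set.Iic n := fun h => h
  rcases Sym2.eq_iff.1 he with ⟨h₁, -⟩ | ⟨h₁, h₂⟩
  · have := hg.injOn (mem hk.le) (mem le_rfl) h₁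
    omega
  · have := hg.injOn (mem hk.le) (mem (Nat.zero_le n)) h₁
    have := hg.injOn (mem hk) (mem le_rfl) h₂
    omega

end IsPathSeq

namespace IsChordal

theorem exists_chord_of_isPathSeq (hH : IsChordal H) (hg : IsPathSeq H g n) (hn : 3 ≤ n)
    (hclose : H.Adj (g n) (g 0)) :
    ∃ a b, a + 2 ≤ b ∧ b ≤ n ∧ (0 < a ∨ b < n) ∧ H.Adj (g a) (g b) := by
  set c := Walk.cons hclose hg.walk
  have hsupp : ∀ y ∈ c.support, ∃ k ≤ n, g k = y := by
    intro y hy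
    rw [Walk.support_cons, hg.support_walk, List.mem_cons, List.mem_map] at hy
    rcases hy with rfl | ⟨k, hk, rfl⟩
    exacts [⟨n, le_rfl, rfl⟩, ⟨k, Nat.lt_succ_iff.1 (List.mem_range.1 hk), rfl⟩]
  have hlen : 4 ≤ c.length := by
    rw [Walk.length_cons, hg.length_walk]
    omega
  obtain ⟨u, w, hu, hw, huw, hne⟩ := hH c (hg.isCycle_cons_walk (by omega) hclose) hlen
  obtain ⟨a, ha, rfl⟩ := hsupp u hu
  obtain ⟨b, hb, rfl⟩ := hsupp w hw
  have hedges : ∀ k < n, s(g k, g (k + 1)) ∈ c.edges := fun k hk => by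
    rw [Walk.edges_cons, hg.edges_walk]
    exact List.mem_cons_of_mem _ (List.mem_map.2 ⟨k, List.mem_range.2 hk, rfl⟩)
  clear hu hw
  wlog hab : a < b generalizing a b
  · rcases (Nat.not_lt.1 hab).lt_or_eq with hba | rfl
    · exact this b hb a ha huw.symm (by rwa [Sym2.eq_swap]) hba
    · exact absurd huw (H.irrefl)
  refine ⟨a, b, ?_, hb, ?_, huw⟩
  · by_contra! hab'
    obtain rfl : b = a + 1 := by omega
    exact hne (hedges a (by omega))
  · by_contra! hab'
    obtain ⟨rfl, rfl⟩ : a = 0 ∧ b = n := by omega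
    exact hne (by rw [Sym2.eq_swap]; exact List.mem_cons_self ..)

theorem not_adj_of_isPathSeq (hH : IsChordal H) (hg : IsPathSeq H g n)
    (htwo : ∀ k, k + 2 ≤ n → ¬H.Adj (g k) (g (k + 2))) ⦃a b : ℕ⦄ (hab : a + 2 ≤ b)
    (hb : b ≤ n) : ¬H.Adj (g a) (g b) := by
  induction hd : b - a using Nat.strong_induction_on generalizing a b with
  | _ d ih =>
  intro hadj
  obtain rfl | hd3 : b = a + 2 ∨ 3 ≤ d := by omega
  · exact htwo a hb hadj
  have hseg := (hg.shift (m := a) (by omega)).mono (m := b - a) (by omega)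
  obtain ⟨a', b', hab', hb', hshort, hadj'⟩ := hH.exists_chord_of_isPathSeq hseg (by omega)
    (by rw [Nat.add_sub_of_le (by omega : a ≤ b), Nat.add_zero]; exact hadj.symm)
  exact ih (b' - a') (by omega) (a := a + a') (b := a + b') (by omega) (by omega) (by omega)
    hadj'

theorem adj_of_adj_ends (hH : IsChordal H) (hg : IsPathSeq H g n)
    (hind : ∀ ⦃a b⦄, a + 2 ≤ b → b ≤ n → ¬H.Adj (g a) (g b)) {x : V} (hx : ∀ k ≤ n, g k ≠ x)
    (h₀ : H.Adj x (g 0)) (hn : H.Adj x (g n)) {k : ℕ} (hk : k ≤ n) : H.Adj x (g k) := by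
  induction n using Nat.strong_induction_on generalizing g k with
  | _ n ih =>
  obtain rfl | rfl | hkn : k = 0 ∨ k = n ∨ (0 < k ∧ k < n) := by omega
  · exact h₀
  · exact hn
  obtain ⟨m, hm₀, hmn, hxm⟩ : ∃ m, 0 < m ∧ m < n ∧ H.Adj x (g m) := by
    obtain ⟨a', b', hab, hb, hshort, hadj⟩ :=
      hH.exists_chord_of_isPathSeq (hg.cons hx h₀) (by omega) hn.symm
    obtain ⟨b, rfl⟩ : ∃ b, b' = b + 1 := ⟨b' - 1, by omega⟩
    cases a' with
    | zero => exact ⟨b, by omega, by omega, hadj⟩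
    | succ a => exact absurd hadj (hind (by omega) (by omega))
  rcases le_total k m with hkm | hmk
  · exact ih m hmn (hg.mono hmn.le) (fun _ _ hab hb => hind hab (by omega))
      (fun j hj => hx j (by omega)) h₀ hxm hkm
  · have := ih (n - m) (by omega) (hg.shift hmn.le)
      (fun a b hab hb => hind (a := m + a) (b := m + b) (by omega) (by omega))
      (fun j hj => hx (m + j) (by omega)) hxm (by rwa [Nat.add_sub_of_le hmn.le])
      (k := k - m) (by omega)
    rwa [Nat.add_sub_of_le hmk] at this

end IsChordal

namespace ZipperChain

variable {C : Type} {G : SimpleGraph V} {col : V → Set C} (zc : ZipperChain G col)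

theorem not_adj_q_add_two (hproper : ProperlyMulticolored H col) {k : ℕ} (hk : 1 ≤ k)
    (hk₂ : k + 2 ≤ zc.qlen) : ¬H.Adj (zc.q k) (zc.q (k + 2)) := fun hadj => by
  have hdisj := hproper hadj
  rw [zc.col_q k hk (by omega), zc.col_q (k + 2) (by omega) hk₂, Nat.add_mod_right] at hdisj
  exact Set.not_disjoint_iff.2 ⟨_, Set.mem_insert _ _, Set.mem_insert _ _⟩ hdisj

theorem isPathSeq_q (hGH : G ≤ H) {j₁ j₂ : ℕ} (hj₁ : 1 ≤ j₁) (hj : j₁ ≤ j₂)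
    (hj₂ : j₂ ≤ zc.qlen) :
    IsPathSeq H (fun k => zc.q (j₁ + k)) (j₂ - j₁) where
  injOn a ha b hb hab := by
    simp only [Set.mem_Iic] at ha hb
    have := zc.q_inj _ _ (by omega) (by omega) (by omega) (by omega) hab
    omega
  adj k hk := hGH (zc.q_adj (j₁ + k) (by omega) (by omega))

end ZipperChain

theorem zipper_convex_general {V C : Type} (G : SimpleGraph V) (col : V → Set C)
    (zc : ZipperChain G col)
    (H : SimpleGraph V) (hGH : G ≤ H) (hchord : IsChordal H)
    (hproper : ProperlyMulticolored H col)
    (i j₁ j₂ : ℕ) (hi : 1 ≤ i) (hip : i ≤ zc.plen)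
    (hj₁ : 1 ≤ j₁) (hj₂ : j₂ ≤ zc.qlen) (hlt : j₁ < j₂)
    (h₁ : H.Adj (zc.p i) (zc.q j₁)) (h₂ : H.Adj (zc.p i) (zc.q j₂)) :
    ∀ j, j₁ < j → j < j₂ → H.Adj (zc.p i) (zc.q j) := by
  intro j hj₁j hjj₂
  have hQ := zc.isPathSeq_q hGH hj₁ hlt.le hj₂
  have hinduced := hchord.not_adj_of_isPathSeq hQ
    fun k hk => zc.not_adj_q_add_two hproper (by omega) (by omega)
  have := hchord.adj_of_adj_ends hQ hinduced
    (fun k hk => (zc.pq_disjoint i (j₁ + k) hi hip (by omega) (by omega)).symm) h₁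
    (by rwa [Nat.add_sub_of_le hlt.le]) (k := j - j₁) (by omega)
  rwa [Nat.add_sub_of_le hj₁j.le] at this

/-- if a properly multicolored triangulation `H` of `G` contains two edges
between `P` and `Q` sharing the common endpoint `p i` in `P`, with the other endpoints
`q j₁` and `q j₂` (`j₁ < j₂`), then `p i` is adjacent in `H` to every vertex of `Q`
lying between `q j₁` and `q j₂`. -/
theorem zipper_convex {V C : Type} (G : SimpleGraph V) (col : V → Set C)
    (zc : ZipperChain G col) (hcyc : zc.InCycle)
    (H : SimpleGraph V) (hGH : G ≤ H) (hchord : IsChordal H)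
    (hproper : ProperlyMulticolored H col)
    (i j₁ j₂ : ℕ) (hi : 1 ≤ i) (hip : i ≤ zc.plen)
    (hj₁ : 1 ≤ j₁) (hj₂ : j₂ ≤ zc.qlen) (hlt : j₁ < j₂)
    (h₁ : H.Adj (zc.p i) (zc.q j₁)) (h₂ : H.Adj (zc.p i) (zc.q j₂)) :
    ∀ j, j₁ < j → j < j₂ → H.Adj (zc.p i) (zc.q j) :=
  zipper_convex_general G col zc H hGH hchord hproper i j₁ j₂ hi hip hj₁ hj₂ hlt h₁ h₂
end

section
/- Let G be a multicolored graph with color set of size k, and construct the colored graph G' as follows: for each vertex v of G with color set of size k_v, G' contains a clique C_v of k_v vertices, each colored with a distinct color from v's color set; and for each edge (v,w) of G, G' contains all edges between C_v and C_w. Then G admits a properly multicolored triangulation if and only if G' admits a properly colored triangulation. Moreover, G' has at most k·|V(G)| vertices and uses the same k colors. -/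
/-- The vertex set of the colored graph `G'` built from the multicolored graph `G`:
for each vertex `v` of `G`, one vertex `(v, c)` for each color `c` in `v`'s color set
(these form the clique `C_v`); the vertex `(v, c)` is colored `c`. -/
def SplitVert {V C : Type} (col : V → Finset C) : Type := {p : V × C // p.2 ∈ col p.1}

/-- The colored graph `G'`: inside each clique `C_v` all vertices are pairwise adjacent,
and for every edge `(v, w)` of `G` all edges between `C_v` and `C_w` are present. -/
def SplitGraph {V C : Type} (G : SimpleGraph V) (col : V → Finset C) :
    SimpleGraph (SplitVert col) :=
  SimpleGraph.fromRel fun p q =>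
    (p.1.1 = q.1.1 ∧ p.1.2 ≠ q.1.2) ∨ G.Adj p.1.1 q.1.1

instance instFintypeSplitVert {V C : Type} [Fintype V] [Fintype C] [DecidableEq C]
    (col : V → Finset C) : Fintype (SplitVert col) :=
  Subtype.fintype fun p : V × C => p.2 ∈ col p.1

/-!
A graph is chordal iff it has no hole, an induced cycle `cycleGraph (m + 4)`.

If `H` is a properly multicolored triangulation of `G`, blowing every vertex `v` of `H` up to the
clique `C_v` gives a properly colored triangulation of `G'`: a hole of the blow-up meets each
clique at most once, so it projects onto a hole of `H`.

Conversely, inside a properly colored triangulation of `G'` pick a minimal triangulation `K` of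
`G'`. Cutting the edges from a clique `C_u` to the vertices that are not adjacent to all of `C_u`
keeps `K` chordal, by the fan lemma: in a chordal graph, a vertex adjacent to both ends of an
induced path is adjacent to its second vertex. So by minimality every `C_u` is a module of `K`,
and joining `u` to `v` when `C_u` and `C_v` are completely joined in `K` gives a chordal supergraph
of `G`. It is properly multicolored, since a common colour `c` of `u` and `v` would make the two
vertices `(u, c)` and `(v, c)` of colour `c` adjacent.
-/

open SimpleGraph

variable {α β : Type} {m : ℕ}

namespace Fin

lemma add_one_add_one_ne_self (u : Fin (m + 3)) : u + 1 + 1 ≠ u := by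
  rw [add_assoc, Ne, add_eq_left]
  simp [Fin.ext_iff, Fin.val_add, Nat.mod_eq_of_lt]

lemma sub_one_ne_add_one (u : Fin (m + 3)) : u - 1 ≠ u + 1 := by
  have := add_one_add_one_ne_self (u - 1)
  rwa [sub_add_cancel, ne_comm] at this

end Fin

namespace SimpleGraph

lemma cycleGraph_adj_iff_eq_add_one {u v : Fin (m + 2)} :
    (cycleGraph (m + 2)).Adj u v ↔ v = u + 1 ∨ u = v + 1 := by
  rw [cycleGraph_adj, sub_eq_iff_eq_add', sub_eq_iff_eq_add', or_comm]

lemma cycleGraph_adj_add_one (u : Fin (m + 2)) : (cycleGraph (m + 2)).Adj u (u + 1) :=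
  cycleGraph_adj_iff_eq_add_one.2 (Or.inl rfl)

lemma cycleGraph_not_adj_add_one_add_one (u : Fin (m + 4)) :
    ¬(cycleGraph (m + 4)).Adj u (u + 1 + 1) := by
  have hne : u ≠ u + 1 + 1 + 1 := by
    rw [add_assoc, add_assoc, Ne, left_eq_add]
    simp [Fin.ext_iff, Fin.val_add, Nat.mod_eq_of_lt]
  rw [cycleGraph_adj_iff_eq_add_one, not_or]
  exact ⟨by simp, hne⟩

lemma cycleGraph_not_adj_sub_one_add_one (u : Fin (m + 4)) :
    ¬(cycleGraph (m + 4)).Adj (u - 1) (u + 1) := by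
  have := cycleGraph_not_adj_add_one_add_one (u - 1)
  rwa [sub_add_cancel] at this

def pathGraphEmbeddingCycleGraph : pathGraph (m + 1) ↪g cycleGraph (m + 2) :=
  ⟨Fin.castSuccEmb, fun {i j} => by
    simp [cycleGraph_adj_iff_eq_add_one, pathGraph_adj, Fin.coeSucc_eq_succ, Fin.ext_iff,
      eq_comm]⟩

lemma exists_pathGraph_embedding_avoiding (a : Fin (m + 4)) :
    ∃ P : pathGraph (m + 3) ↪g cycleGraph (m + 4), a ∉ Set.range P ∧
      (cycleGraph (m + 4)).Adj a (P 0) ∧ (cycleGraph (m + 4)).Adj a (P (Fin.last _)) ∧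
      ¬(cycleGraph (m + 4)).Adj a (P 1) := by
  let rotate : cycleGraph (m + 4) ↪g cycleGraph (m + 4) :=
    ⟨⟨(· + (a + 1)), add_left_injective _⟩, by
      simp [cycleGraph_adj_iff_eq_add_one, add_right_comm _ (a + 1) 1]⟩
  have hP (i : Fin (m + 3)) : (rotate.comp pathGraphEmbeddingCycleGraph) i = i.succ + a := by
    simp [rotate, pathGraphEmbeddingCycleGraph, ← Fin.coeSucc_eq_succ, add_comm a, add_assoc]
  refine ⟨rotate.comp pathGraphEmbeddingCycleGraph, ?_, ?_, ?_, ?_⟩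
  · rintro ⟨i, hi⟩
    rw [hP, add_eq_right] at hi
    exact Fin.succ_ne_zero i hi
  · rw [hP, Fin.succ_zero_eq_one, add_comm 1 a]
    exact cycleGraph_adj_add_one a
  · rw [hP, Fin.succ_last, eq_neg_of_add_eq_zero_left (Fin.last_add_one _), neg_add_eq_sub]
    have := (cycleGraph_adj_add_one (a - 1)).symm
    rwa [sub_add_cancel] at this
  · rw [hP, ← Fin.coeSucc_eq_succ, Fin.castSucc_one, add_comm (1 + 1) a, ← add_assoc]
    exact cycleGraph_not_adj_add_one_add_one a

lemma cycleGraph.mem_edges_cycle {a b : Fin (m + 3)} (h : (cycleGraph (m + 3)).Adj a b) :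
    s(a, b) ∈ (cycleGraph.cycle m).edges := by
  classical
  -- the cycle is a trail of length `m + 3`, and `cycleGraph (m + 3)` has `m + 3` edges
  have hcard : (cycleGraph (m + 3)).edgeFinset.card = m + 3 := by
    have := sum_degrees_eq_twice_card_edges (cycleGraph (m + 3))
    simp only [cycleGraph_degree_three_le, Finset.sum_const, Finset.card_univ, Fintype.card_fin,
      smul_eq_mul] at this
    omega
  have hsub : (cycleGraph.cycle m).edges.toFinset ⊆ (cycleGraph (m + 3)).edgeFinset :=
    fun e he => mem_edgeFinset.2 (Walk.edges_subset_edgeSet _ (List.mem_toFinset.1 he))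
  have heq := Finset.eq_of_subset_of_card_le hsub (by
    rw [hcard, List.toFinset_card_of_nodup cycleGraph.isCycle_cycle.edges_nodup,
      Walk.length_edges, cycleGraph.length_cycle])
  rw [← List.mem_toFinset, heq, mem_edgeFinset]
  exact h

lemma isIndContained_cycleGraph_of_pathGraph {K : SimpleGraph α} (P : pathGraph (m + 2) ↪g K)
    {y : α} (hy : y ∉ Set.range P)
    (hadj : ∀ i, K.Adj y (P i) ↔ i = 0 ∨ i = Fin.last (m + 1)) :
    cycleGraph (m + 3) ⊴ K := by
  let g : Fin (m + 3) → α := Fin.lastCases y P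
  have hapex (j : Fin (m + 2)) :
      K.Adj y (P j) ↔ (cycleGraph (m + 3)).Adj (Fin.last _) j.castSucc := by
    rw [hadj, cycleGraph_adj_iff_eq_add_one, Fin.last_add_one, Fin.coeSucc_eq_succ,
      Fin.castSucc_eq_zero_iff, eq_comm (a := Fin.last _), Fin.succ_eq_last_succ]
  have hinj : Function.Injective g := by
    intro i j h
    induction i using Fin.lastCases <;> induction j using Fin.lastCases <;>
      simp_all [g]
  refine ⟨⟨⟨g, hinj⟩, fun {i j} => ?_⟩⟩
  change K.Adj (g i) (g j) ↔ _
  induction i using Fin.lastCases <;> induction j using Fin.lastCases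
  · simp [g]
  · simp [g, hapex]
  · simp [g, adj_comm, hapex]
  · simp only [g, Fin.lastCases_castSucc, P.map_adj_iff]
    exact pathGraphEmbeddingCycleGraph.map_adj_iff.symm

end SimpleGraph

lemma IsChordal.not_isIndContained_cycleGraph {H : SimpleGraph α} (hH : IsChordal H) (m : ℕ) :
    ¬cycleGraph (m + 4) ⊴ H := by
  rintro ⟨ψ⟩
  obtain ⟨_, _, hu, hw, hadj, hnot⟩ := hH ((cycleGraph.cycle (m + 1)).map ψ.toHom)
    ((Walk.isCycle_map_iff_of_injective ψ.injective).2 cycleGraph.isCycle_cycle) (by simp)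
  rw [Walk.support_map, List.mem_map] at hu hw
  obtain ⟨a, -, rfl⟩ := hu
  obtain ⟨b, -, rfl⟩ := hw
  rw [Walk.edges_map] at hnot
  exact hnot (List.mem_map_of_mem (cycleGraph.mem_edges_cycle (ψ.map_adj_iff.1 hadj)))

lemma isIndContained_cycleGraph_of_not_hasChord {H : SimpleGraph α} {v : α} {c : H.Walk v v}
    (hc : c.IsCycle) (hlen : c.length = m + 4) (hch : ¬HasChord H c) :
    cycleGraph (m + 4) ⊴ H := by
  let g : Fin (m + 4) → α := fun i => c.getVert i
  have hsucc (i : Fin (m + 4)) : g (i + 1) = c.getVert (i + 1) := by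
    simp only [g, Fin.val_add_one]
    split_ifs with h
    · simp [h, ← hlen]
    · rfl
  have hinj : Function.Injective g := fun i j h =>
    Fin.ext (hc.getVert_injOn' (by simp only [Set.mem_ofPred_eq]; omega)
      (by simp only [Set.mem_ofPred_eq]; omega) h)
  have hstep (i : Fin (m + 4)) : H.Adj (g i) (g (i + 1)) := by
    rw [hsucc]
    exact c.adj_getVert_succ (by omega)
  refine ⟨⟨⟨g, hinj⟩, fun {i j} => ?_⟩⟩
  change H.Adj (g i) (g j) ↔ _
  rw [cycleGraph_adj_iff_eq_add_one]
  refine ⟨fun hadj => ?_, ?_⟩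
  · have hmem : s(g i, g j) ∈ c.edges := by
      by_contra hnot
      exact hch ⟨_, _, c.getVert_mem_support _, c.getVert_mem_support _, hadj, hnot⟩
    obtain ⟨k, hk, hkeq⟩ := (Walk.mk_mem_edges_iff_exists c).1 hmem
    rw [← hsucc ⟨k, by omega⟩] at hkeq
    rcases Sym2.eq_iff.1 hkeq with ⟨h1, h2⟩ | ⟨h1, h2⟩
    · exact Or.inl ((hinj h2).symm.trans (congrArg (· + 1) (hinj h1)))
    · exact Or.inr ((hinj h2).symm.trans (congrArg (· + 1) (hinj h1)))
  · rintro (rfl | rfl)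
    exacts [hstep i, (hstep j).symm]

theorem isChordal_iff {H : SimpleGraph α} : IsChordal H ↔ ∀ m, ¬cycleGraph (m + 4) ⊴ H := by
  refine ⟨IsChordal.not_isIndContained_cycleGraph, fun h v c hc hlen => ?_⟩
  obtain ⟨m, hm⟩ : ∃ m, c.length = m + 4 := ⟨c.length - 4, by omega⟩
  by_contra hch
  exact h m (isIndContained_cycleGraph_of_not_hasChord hc hm hch)

theorem IsChordal.adj_one_of_adj_zero_of_adj_last {K : SimpleGraph α} (hK : IsChordal K)
    {y : α} (P : pathGraph (m + 2) ↪g K) (hy : y ∉ Set.range P) (h0 : K.Adj y (P 0))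
    (hl : K.Adj y (P (Fin.last _))) : K.Adj y (P 1) := by
  induction m using Nat.strong_induction_on with
  | _ m ih =>
  by_contra h1
  -- a neighbour of `y` inside the path cuts off a shorter path; without one, `y` closes a hole
  by_cases hmid : ∃ k : Fin (m + 2), k ≠ 0 ∧ k ≠ Fin.last _ ∧ K.Adj y (P k)
  · obtain ⟨k, hk0, hkl, hk⟩ := hmid
    obtain ⟨j, hj⟩ : ∃ j, (k : ℕ) = j + 1 :=
      Nat.exists_eq_add_one_of_ne_zero (Fin.val_ne_iff.2 hk0)
    have hjm : j < m := by
      have := Fin.val_lt_last hkl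
      omega
    let pre : pathGraph (j + 2) ↪g pathGraph (m + 2) :=
      ⟨Fin.castLEEmb (by omega), by simp [pathGraph_adj]⟩
    have hpre0 : pre 0 = 0 := Fin.ext (by simp [pre])
    have hpre1 : pre 1 = 1 := Fin.ext (by simp [pre])
    have hprek : pre (Fin.last _) = k := Fin.ext (by simp [pre, hj])
    have := ih j hjm (P.comp pre) (fun ⟨i, hi⟩ => hy ⟨_, hi⟩)
      (by rwa [Embedding.coe_comp, Function.comp_apply, hpre0])
      (by rwa [Embedding.coe_comp, Function.comp_apply, hprek])
    rw [Embedding.coe_comp, Function.comp_apply, hpre1] at this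
    exact h1 this
  · push Not at hmid
    rcases m with _ | m
    · exact h1 hl
    · refine hK.not_isIndContained_cycleGraph m
        (isIndContained_cycleGraph_of_pathGraph P hy fun i => ⟨fun h => ?_, ?_⟩)
      · by_contra hi
        push Not at hi
        exact hmid i hi.1 hi.2 h
      · rintro (rfl | rfl)
        exacts [h0, hl]

namespace SimpleGraph

section Blowup

variable {K K' : SimpleGraph β} {f : α → β}

def blowup (K : SimpleGraph β) (f : α → β) : SimpleGraph α :=
  fromRel fun p q => f p = f q ∨ K.Adj (f p) (f q)

lemma blowup_adj {p q : α} :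
    (K.blowup f).Adj p q ↔ p ≠ q ∧ (f p = f q ∨ K.Adj (f p) (f q)) := by
  rw [blowup, fromRel_adj, eq_comm (a := f q), adj_comm K (f q), or_self]

lemma blowup_adj_of_ne {p q : α} (h : f p ≠ f q) :
    (K.blowup f).Adj p q ↔ K.Adj (f p) (f q) := by
  rw [blowup_adj]
  exact ⟨fun h' => h'.2.resolve_left h, fun h' => ⟨fun e => h (congrArg f e), Or.inr h'⟩⟩

lemma blowup_mono (h : K ≤ K') : K.blowup f ≤ K'.blowup f := fun p q hpq => by
  rw [blowup_adj] at hpq ⊢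
  exact ⟨hpq.1, hpq.2.imp_right (@h _ _)⟩

lemma isClique_blowup_fiber (b : β) : (K.blowup f).IsClique (f ⁻¹' {b}) :=
  fun _ hp _ hq hne => blowup_adj.2 ⟨hne, Or.inl (hp.trans hq.symm)⟩

end Blowup

/-- A vertex with an empty fiber is adjacent to every other vertex. -/
def fiberJoin (f : α → β) (K : SimpleGraph α) : SimpleGraph β where
  Adj u v := u ≠ v ∧ ∀ p q, f p = u → f q = v → K.Adj p q
  symm := ⟨fun _ _ h => ⟨h.1.symm, fun p q hp hq => (h.2 q p hq hp).symm⟩⟩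
  loopless := ⟨fun _ h => h.1 rfl⟩

def cutToCommonNeighbors (K : SimpleGraph α) (M : Set α) : SimpleGraph α where
  Adj p q := K.Adj p q ∧ (p ∈ M → q ∉ M → ∀ x ∈ M, K.Adj x q) ∧
    (q ∈ M → p ∉ M → ∀ x ∈ M, K.Adj x p)
  symm := ⟨fun _ _ h => ⟨h.1.symm, h.2.2, h.2.1⟩⟩
  loopless := ⟨fun _ h => h.1.ne rfl⟩

section Cut

variable {K : SimpleGraph α} {M : Set α}

lemma cutToCommonNeighbors_le : K.cutToCommonNeighbors M ≤ K := fun _ _ h => h.1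

lemma cutToCommonNeighbors_adj_of_notMem {p q : α} (hp : p ∉ M) (hq : q ∉ M) :
    (K.cutToCommonNeighbors M).Adj p q ↔ K.Adj p q :=
  ⟨And.left, fun h => ⟨h, fun h' => absurd h' hp, fun h' => absurd h' hq⟩⟩

lemma IsClique.cutToCommonNeighbors_adj (hM : K.IsClique M) {p x y : α} (hx : x ∈ M)
    (hy : y ∈ M) (hpx : (K.cutToCommonNeighbors M).Adj p x) (hpy : p ≠ y) :
    (K.cutToCommonNeighbors M).Adj p y := by
  by_cases hp : p ∈ M
  · exact ⟨hM hp hy hpy, fun _ h => absurd hy h, fun _ h => absurd hp h⟩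
  · have hcommon := hpx.2.2 hx hp
    exact ⟨(hcommon y hy).symm, fun h => absurd h hp, fun _ _ => hcommon⟩

end Cut

lemma blowup_le_cutToCommonNeighbors {K : SimpleGraph β} {K' : SimpleGraph α} {f : α → β}
    (hle : K.blowup f ≤ K') (b : β) : K.blowup f ≤ K'.cutToCommonNeighbors (f ⁻¹' {b}) := by
  have key {p q x : α} (hp : f p = b) (hq : f q ≠ b) (hx : f x = b)
      (h : (K.blowup f).Adj p q) : (K.blowup f).Adj x q := by
    rw [blowup_adj_of_ne (by rw [hp]; exact hq.symm)] at h
    rwa [blowup_adj_of_ne (by rw [hx]; exact hq.symm), hx, ← hp]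
  exact fun p q hpq => ⟨hle hpq, fun hp hq x hx => hle (key hp hq hx hpq),
    fun hq hp x hx => hle (key hq hp hx hpq.symm)⟩

end SimpleGraph

theorem IsChordal.blowup {K : SimpleGraph β} (hK : IsChordal K) (f : α → β) :
    IsChordal (K.blowup f) := by
  refine isChordal_iff.2 fun m ⟨ψ⟩ => hK.not_isIndContained_cycleGraph m ?_
  -- a fiber containing `ψ a` and `ψ (a + 1)` would make `ψ (a - 1)` adjacent to `ψ (a + 1)`
  have hstep (a : Fin (m + 4)) : f (ψ a) ≠ f (ψ (a + 1)) := by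
    intro h
    have hprev := ψ.map_adj_iff.2 (cycleGraph_adj_add_one (a - 1))
    rw [sub_add_cancel, blowup_adj, h] at hprev
    exact cycleGraph_not_adj_sub_one_add_one a
      (ψ.map_adj_iff.1 (blowup_adj.2 ⟨ψ.injective.ne (Fin.sub_one_ne_add_one a), hprev.2⟩))
  have hinj : Function.Injective (f ∘ ψ) := by
    intro a b h
    by_contra hab
    rcases cycleGraph_adj_iff_eq_add_one.1
      (ψ.map_adj_iff.1 (blowup_adj.2 ⟨ψ.injective.ne hab, Or.inl h⟩)) with rfl | rfl
    exacts [hstep a h, hstep b h.symm]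
  refine ⟨⟨⟨f ∘ ψ, hinj⟩, fun {a b} => ?_⟩⟩
  rcases eq_or_ne a b with rfl | hab
  · simp
  · exact (blowup_adj_of_ne (K := K) (p := ψ a) (q := ψ b) (hinj.ne hab)).symm.trans
      ψ.map_adj_iff

theorem IsChordal.fiberJoin {K : SimpleGraph α} {f : α → β} (hK : IsChordal K)
    (hmod : ∀ ⦃p q r⦄, f p = f q → f r ≠ f p → K.Adj p r → K.Adj q r) :
    IsChordal (fiberJoin f K) := by
  refine isChordal_iff.2 fun m ⟨ψ⟩ => hK.not_isIndContained_cycleGraph m ?_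
  have hfiber (a : Fin (m + 4)) : ∃ p, f p = ψ a := by
    by_contra! h
    exact cycleGraph_not_adj_add_one_add_one a (ψ.map_adj_iff.1
      ⟨ψ.injective.ne (Fin.add_one_add_one_ne_self a).symm, fun p _ hp => absurd hp (h p)⟩)
  choose σ hσ using hfiber
  have hinj : Function.Injective σ := fun a b h => ψ.injective (by rw [← hσ, ← hσ, h])
  refine ⟨⟨⟨σ, hinj⟩, fun {a b} => ?_⟩⟩
  change K.Adj (σ a) (σ b) ↔ _
  rw [← ψ.map_adj_iff]
  refine ⟨fun h => ?_, fun h => h.2 _ _ (hσ a) (hσ b)⟩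
  have hab : f (σ a) ≠ f (σ b) := by
    rw [hσ, hσ]
    exact fun e => h.ne (congrArg σ (ψ.injective e))
  refine ⟨by rwa [← hσ, ← hσ], fun p q hp hq => ?_⟩
  have hpb : K.Adj p (σ b) := hmod (by rw [hp, hσ]) hab.symm h
  exact (hmod (by rw [hq, hσ]) (by rwa [hp, ← hσ]) hpb.symm).symm

theorem IsChordal.cutToCommonNeighbors {K : SimpleGraph α} {M : Set α} (hK : IsChordal K)
    (hM : K.IsClique M) : IsChordal (K.cutToCommonNeighbors M) := by
  refine isChordal_iff.2 fun m ⟨ψ⟩ => ?_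
  by_cases hA : ∃ a, ψ a ∈ M
  swap
  · push Not at hA
    exact hK.not_isIndContained_cycleGraph m ⟨⟨ψ.toEmbedding, fun {a b} =>
      (cutToCommonNeighbors_adj_of_notMem (hA a) (hA b)).symm.trans ψ.map_adj_iff⟩⟩
  obtain ⟨a, ha⟩ := hA
  have hcons (c : Fin (m + 4)) (hc : ψ c ∈ M) (hc' : ψ (c + 1) ∈ M) : False := by
    have hprev := ψ.map_adj_iff.2 (cycleGraph_adj_add_one (c - 1))
    rw [sub_add_cancel] at hprev
    exact cycleGraph_not_adj_sub_one_add_one c (ψ.map_adj_iff.1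
      (hM.cutToCommonNeighbors_adj hc hc' hprev (ψ.injective.ne (Fin.sub_one_ne_add_one c))))
  have hout (b : Fin (m + 4)) (hb : b ≠ a) : ψ b ∉ M := by
    intro hbM
    have := ψ.map_adj_iff.1
      ⟨hM ha hbM (ψ.injective.ne hb.symm), fun _ h => absurd hbM h, fun _ h => absurd ha h⟩
    rcases cycleGraph_adj_iff_eq_add_one.1 this with rfl | rfl
    exacts [hcons a ha hbM, hcons b hbM ha]
  obtain ⟨P, haP, h0, hl, h1⟩ := exists_pathGraph_embedding_avoiding a
  have hPout (i : Fin (m + 3)) : ψ (P i) ∉ M := hout _ fun e => haP ⟨i, e⟩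
  let Q : pathGraph (m + 3) ↪g K := ⟨(ψ.comp P).toEmbedding, fun {i j} =>
    (cutToCommonNeighbors_adj_of_notMem (hPout i) (hPout j)).symm.trans (ψ.comp P).map_adj_iff⟩
  -- the rest of the hole is an induced path of `K` whose ends are common neighbours of `M`
  have hQ1 : ∀ y ∈ M, K.Adj y (Q 1) := fun y hy =>
    hK.adj_one_of_adj_zero_of_adj_last Q (fun ⟨i, hi⟩ => hPout i (by rwa [← hi] at hy))
      ((ψ.map_adj_iff.2 h0).2.1 ha (hPout 0) y hy) ((ψ.map_adj_iff.2 hl).2.1 ha (hPout _) y hy)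
  exact h1 (ψ.map_adj_iff.1 ⟨hQ1 _ ha, fun _ _ => hQ1, fun h => absurd h (hPout 1)⟩)

section Split

variable {V C : Type} (G : SimpleGraph V) (col : V → Finset C)

lemma splitGraph_eq_blowup : SplitGraph G col = G.blowup fun p => p.1.1 := by
  ext p q
  rw [SplitGraph, fromRel_adj, blowup_adj]
  refine and_congr_right fun hne => ⟨?_, ?_⟩
  · rintro ((⟨h, -⟩ | h) | (⟨h, -⟩ | h))
    exacts [Or.inl h, Or.inr h, Or.inl h.symm, Or.inr h.symm]
  · rintro (h | h)
    exacts [Or.inl (Or.inl ⟨h, fun hc => hne (Subtype.ext (Prod.ext h hc))⟩),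
      Or.inl (Or.inr h)]

lemma exists_colored_triangulation_of_multicolored {H : SimpleGraph V} (hGH : G ≤ H)
    (hH : IsChordal H) (hcol : ∀ ⦃u v : V⦄, H.Adj u v → Disjoint (col u) (col v)) :
    ∃ H' : SimpleGraph (SplitVert col), SplitGraph G col ≤ H' ∧ IsChordal H' ∧
      ∀ ⦃p q : SplitVert col⦄, H'.Adj p q → p.1.2 ≠ q.1.2 := by
  refine ⟨H.blowup fun p => p.1.1, (splitGraph_eq_blowup G col).trans_le (blowup_mono hGH),
    hH.blowup _, fun p q hpq hc => ?_⟩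
  rcases blowup_adj.1 hpq with ⟨hne, h | h⟩
  · exact hne (Subtype.ext (Prod.ext h hc))
  · exact Finset.disjoint_left.1 (hcol h) p.2 (hc ▸ q.2)

lemma exists_multicolored_triangulation_of_colored [Finite V]
    {H' : SimpleGraph (SplitVert col)} (hle : SplitGraph G col ≤ H') (hH' : IsChordal H')
    (hcol : ∀ ⦃p q : SplitVert col⦄, H'.Adj p q → p.1.2 ≠ q.1.2) :
    ∃ H : SimpleGraph V, G ≤ H ∧ IsChordal H ∧
      ∀ ⦃u v : V⦄, H.Adj u v → Disjoint (col u) (col v) := by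
  let π : SplitVert col → V := fun p => p.1.1
  rw [splitGraph_eq_blowup] at hle
  have : Finite (SplitVert col) :=
    .of_equiv _ (Equiv.subtypeProdEquivSigmaSubtype fun v c => c ∈ col v).symm
  obtain ⟨K, hKH', hKmin⟩ :=
    Finite.exists_le_minimal (p := fun K => G.blowup π ≤ K ∧ IsChordal K) ⟨hle, hH'⟩
  have hmod : ∀ ⦃p q r⦄, π p = π q → π r ≠ π p → K.Adj p r → K.Adj q r := by
    intro p q r hpq hr h
    -- cutting the fiber of `p` to its common neighbours stays a triangulation of `G'`
    have hcut := hKmin.le_of_le ⟨blowup_le_cutToCommonNeighbors hKmin.prop.1 (π p),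
      hKmin.prop.2.cutToCommonNeighbors ((isClique_blowup_fiber _).mono hKmin.prop.1)⟩
      cutToCommonNeighbors_le
    exact (hcut h).2.1 rfl hr q hpq.symm
  refine ⟨fiberJoin π K, fun u v huv => ⟨huv.ne, fun p q hp hq => hKmin.prop.1 ?_⟩,
    hKmin.prop.2.fiberJoin hmod, fun u v huv => Finset.disjoint_left.2 fun c hu hv => ?_⟩
  · rwa [blowup_adj_of_ne (by rw [hp, hq]; exact huv.ne), hp, hq]
  · exact hcol (hKH' (huv.2 ⟨(u, c), hu⟩ ⟨(v, c), hv⟩ rfl rfl)) rfl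

end Split

/-- a multicolored graph `G` (with color set `C` of size `k`) admits a
properly multicolored triangulation iff the colored graph `G'` (each vertex `v` replaced
by a clique on `v`'s colors, edges of `G` replaced by complete bipartite connections)
admits a properly colored triangulation; moreover `G'` has at most `k·|V(G)|` vertices
and is colored with the same `k` colors. -/
theorem multicolored_iff_colored_triangulation {V C : Type}
    [Fintype V] [Fintype C] [DecidableEq C]
    (G : SimpleGraph V) (col : V → Finset C) :
    ((∃ H : SimpleGraph V, G ≤ H ∧ IsChordal H ∧
        ∀ ⦃u v : V⦄, H.Adj u v → Disjoint (col u) (col v)) ↔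
      (∃ H' : SimpleGraph (SplitVert col), SplitGraph G col ≤ H' ∧ IsChordal H' ∧
        ∀ ⦃p q : SplitVert col⦄, H'.Adj p q → p.1.2 ≠ q.1.2)) ∧
    Fintype.card (SplitVert col) ≤ Fintype.card C * Fintype.card V := by
  refine ⟨⟨fun ⟨_, hGH, hH, hcol⟩ =>
      exists_colored_triangulation_of_multicolored G col hGH hH hcol,
    fun ⟨_, hle, hH', hcol⟩ =>
      exists_multicolored_triangulation_of_colored G col hle hH' hcol⟩, ?_⟩
  calc Fintype.card (SplitVert col) ≤ Fintype.card (V × C) := Fintype.card_subtype_le _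
    _ = Fintype.card C * Fintype.card V := by rw [Fintype.card_prod, mul_comm]
end
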